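/- arXiv:2408.12066 — 7 statements merged into one kernel-verified Lean document; each statement's English description precedes it below -/
import Mathlib

section
/- Let R be a commutative ring, n a natural number, and M a free R-module with basis e indexed by Fin n ⊕ Fin n. In the exterior algebra Λ(M), write ψ̄ᵢ = ι(e(inl i)) and ψⱼ = ι(e(inr j)). Then for every matrix A : Matrix (Fin n) (Fin n) R, the ordered product ∏_{i=0}^{n-1} ( ∑_{j=0}^{n-1} A i j • (ψ̄ᵢ * ψⱼ) ) equals (det A) • ∏_{i=0}^{n-1} (ψ̄ᵢ * ψᵢ), where both products are taken in increasing order of i. (This is the exterior-algebra form of the Berezin integral identity ∫ ∏ᵢ dψ̄ᵢ dψᵢ e^{−∑ ψ̄ᵢ Aᵢⱼ ψⱼ} = det A.) -/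
/-!
For fixed `a`, the map `v ↦ ∏ᵢ ι(aᵢ) ι(vᵢ)` is multilinear, and it is alternating: the
factors have even degree, so they commute, and two factors with `vᵢ = vⱼ` multiply to
`ι(aᵢ) ι(vᵢ) ι(aⱼ) ι(vᵢ) = 0`. Any alternating map `f` satisfies
`f (fun i => ∑ j, A i j • v j) = det A • f v`; take `a = ψ̄` and `v = ψ`.
-/

open ExteriorAlgebra

theorem List.prod_ofFn_eq_zero_of_commute {M₀ : Type*} [MonoidWithZero M₀] {n : ℕ}
    {f : Fin n → M₀} (hf : ∀ i j, Commute (f i) (f j)) {i j : Fin n} (hij : i ≠ j)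
    (h : f i * f j = 0) : (List.ofFn f).prod = 0 := by
  have hperm : (List.finRange n).Perm (i :: j :: ((List.finRange n).erase i).erase j) :=
    (List.perm_cons_erase (List.mem_finRange i)).trans <| .cons i <|
      List.perm_cons_erase <| (List.mem_erase_of_ne hij.symm).2 (List.mem_finRange j)
  have hcomm : ((List.finRange n).map f).Pairwise Commute :=
    List.pairwise_map.2 <| List.Pairwise.imp (fun _ => hf _ _)
      (List.pairwise_iff_forall_sublist.2 fun _ => trivial)
  rw [List.ofFn_eq_map, (hperm.map f).prod_eq' hcomm]
  simp [← mul_assoc, h]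

theorem AlternatingMap.map_sum_smul_eq_det_smul {R M N ι : Type*} [CommRing R]
    [AddCommGroup M] [Module R M] [AddCommGroup N] [Module R N] [Fintype ι] [DecidableEq ι]
    (f : M [⋀^ι]→ₗ[R] N) (v : ι → M) (A : Matrix ι ι R) :
    f (fun i => ∑ j, A i j • v j) = A.det • f v := by
  set b := Pi.basisFun R ι
  set g := f.compLinearMap (Fintype.linearCombination R v)
  -- a top-degree alternating map on `ι → R` is a multiple of the determinant
  have hg : g = b.det.smulRight (g b) := by
    refine b.ext_alternating fun w hw => ?_
    let σ := Equiv.ofBijective w (Finite.injective_iff_bijective.1 hw)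
    change g (b ∘ σ) = b.det.smulRight (g b) (b ∘ σ)
    rw [g.map_perm, AlternatingMap.map_perm, AlternatingMap.smulRight_apply, b.det_self,
      one_smul]
  calc f (fun i => ∑ j, A i j • v j) = g fun i => A i := by
        simp only [g, AlternatingMap.compLinearMap_apply, Fintype.linearCombination_apply]
    _ = A.det • g b := by
        nth_rw 1 [hg]
        rw [AlternatingMap.smulRight_apply, Pi.basisFun_det_apply]
        rfl
    _ = A.det • f v := by
        simp only [g, b, AlternatingMap.compLinearMap_apply, Pi.basisFun_apply,
          Fintype.linearCombination_apply_single, one_smul]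

namespace ExteriorAlgebra

variable {R M : Type*} [CommRing R] [AddCommGroup M] [Module R M]

theorem commute_ι_mul_ι_ι (x y z : M) : Commute (ι R x * ι R y) (ι R z) := by
  have anticomm (u v : M) : ι R u * ι R v = -(ι R v * ι R u) :=
    eq_neg_of_add_eq_zero_left (ι_add_mul_swap u v)
  rw [Commute, SemiconjBy, mul_assoc, anticomm y, mul_neg, ← mul_assoc, anticomm x, neg_mul,
    neg_neg, mul_assoc]

theorem ι_mul_ι_mul_ι_mul_ι_self (x y z : M) : ι R x * ι R z * (ι R y * ι R z) = 0 := by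
  rw [← mul_assoc, (commute_ι_mul_ι_ι x z y).eq, mul_assoc, mul_assoc, ι_sq_zero, mul_zero,
    mul_zero]

variable {n : ℕ}

noncomputable def ιPairProd (a : Fin n → M) : M [⋀^Fin n]→ₗ[R] ExteriorAlgebra R M :=
  { (MultilinearMap.mkPiAlgebraFin R n _).compLinearMap
      fun i => LinearMap.mulLeft R (ι R (a i)) ∘ₗ ι R with
    map_eq_zero_of_eq' := fun v i j hv hij =>
      List.prod_ofFn_eq_zero_of_commute (f := fun k => ι R (a k) * ι R (v k))
        (fun _ _ => (commute_ι_mul_ι_ι _ _ _).mul_right (commute_ι_mul_ι_ι _ _ _)) hij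
        (by rw [hv]; exact ι_mul_ι_mul_ι_mul_ι_self _ _ _) }

theorem ιPairProd_apply (a v : Fin n → M) :
    ιPairProd (R := R) a v = (List.ofFn fun i => ι R (a i) * ι R (v i)).prod := rfl

end ExteriorAlgebra

/-- **Berezin integral / determinant identity in the exterior algebra.**
For a free `R`-module `M` with basis `e` indexed by `Fin n ⊕ Fin n`, writing
`ψ̄ i = ι (e (inl i))` and `ψ j = ι (e (inr j))` in the exterior algebra of `M`,
the ordered product `∏ i, (∑ j, A i j • (ψ̄ i * ψ j))` equals
`(det A) • ∏ i, (ψ̄ i * ψ i)`. -/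
theorem exteriorAlgebra_berezin_det {R : Type*} [CommRing R] {M : Type*} [AddCommGroup M]
    [Module R M] {n : ℕ} (e : Module.Basis (Fin n ⊕ Fin n) R M)
    (A : Matrix (Fin n) (Fin n) R) :
    (List.ofFn fun i : Fin n =>
        ∑ j : Fin n, A i j •
          (ExteriorAlgebra.ι R (e (Sum.inl i)) * ExteriorAlgebra.ι R (e (Sum.inr j)))).prod
      = A.det •
        (List.ofFn fun i : Fin n =>
          ExteriorAlgebra.ι R (e (Sum.inl i)) * ExteriorAlgebra.ι R (e (Sum.inr i))).prod := by
  have := (ιPairProd (R := R) fun i => e (Sum.inl i)).map_sum_smul_eq_det_smul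
    (fun j => e (Sum.inr j)) A
  simpa [ιPairProd_apply, Finset.mul_sum, mul_smul_comm] using this
end

section
/- Let R be a commutative ring, m ≥ 1, and M a free R-module with basis e indexed by Fin 4 × Fin m. In the exterior algebra Λ(M) write aₖ = ι(e(0,k)), āₖ = ι(e(1,k)), cₖ = ι(e(2,k)), c̄ₖ = ι(e(3,k)). Then the ordered product ∏_{k=0}^{m-1} [ (c̄ₖ * aₖ) * ( −(āₖ * c_{(k+1) mod m}) ) ] equals (−1)^{m+1} • ∏_{k=0}^{m-1} ( aₖ * āₖ * cₖ * c̄ₖ ), where both products are taken in increasing order of k. (This is the algebraic identity underlying the computation that a cyclic alternating product of Grassmann bilinears around a loop of length 2m produces the sign (−1)^{m+1}, matching the winding number of an untwisted embedded loop.) -/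
/-!
Put `xₖ = c̄ₖ aₖ āₖ`. Pulling out the `m` minus signs, the left side is
`(-1)^m x₀ c₁ x₁ c₂ ⋯ x_{m-1} c₀`. Moving `c₀` to the front is free past the even blocks
`cₖ xₖ` and costs one sign past the odd `x₀`, which leaves `-(-1)^m ∏ cₖ xₖ`. Finally
`cₖ xₖ = (cₖ c̄ₖ)(aₖ āₖ) = aₖ āₖ cₖ c̄ₖ`, since products of two generators commute with generators.
-/

section AntiCommute

variable {A : Type*} [Ring A] {p x y : A}

theorem commute_mul_of_anticomm (hx : p * x = -(x * p)) (hy : p * y = -(y * p)) :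
    Commute p (x * y) := by
  rw [commute_iff_eq, ← mul_assoc, hx, neg_mul, mul_assoc, hy, mul_neg, neg_neg, mul_assoc]

theorem anticomm_mul_of_commute_of_anticomm (hx : Commute p x) (hy : p * y = -(y * p)) :
    p * (x * y) = -(x * y * p) := by
  rw [← mul_assoc, hx.eq, mul_assoc, hy, mul_neg, mul_assoc]

end AntiCommute

theorem List.ofFn_eq_map_range {α : Type*} {n : ℕ} (f : Fin n → α) (g : ℕ → α)
    (h : ∀ k : Fin n, g k = f k) : List.ofFn f = (List.range n).map g := by
  rw [List.ofFn_eq_map, ← List.map_coe_finRange_eq_range, List.map_map]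
  exact List.map_congr_left fun k _ => (h k).symm

theorem List.prod_range_succ_map_mul_shift {M : Type*} [Monoid M] (x y : ℕ → M) (n : ℕ) :
    ((List.range (n + 1)).map fun k => x k * y (k + 1)).prod
      = x 0 * ((List.range n).map fun k => y (k + 1) * x (k + 1)).prod * y (n + 1) := by
  induction n with
  | zero => simp
  | succ n ih => rw [List.prod_range_succ, ih, List.prod_range_succ]; simp only [mul_assoc]

theorem List.prod_range_succ_map_mul_shift_eq_neg {A : Type*} [Ring A] (x y : ℕ → A) (n : ℕ)
    (hy : y (n + 1) = y 0) (hxy : y 0 * x 0 = -(x 0 * y 0))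
    (hcomm : ∀ k, Commute (y 0) (y (k + 1) * x (k + 1))) :
    ((List.range (n + 1)).map fun k => x k * y (k + 1)).prod
      = -((List.range (n + 1)).map fun k => y k * x k).prod := by
  have hcomm_prod : Commute (y 0) ((List.range n).map fun k => y (k + 1) * x (k + 1)).prod :=
    Commute.list_prod_right _ _ fun _ hz => by
      obtain ⟨k, -, rfl⟩ := List.mem_map.mp hz
      exact hcomm k
  rw [List.prod_range_succ_map_mul_shift, hy, mul_assoc, ← hcomm_prod.eq, ← mul_assoc,
    ← neg_eq_iff_eq_neg.mpr hxy, neg_mul, List.prod_range_succ' (fun k => y k * x k), mul_assoc]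

namespace ExteriorAlgebra

variable {R : Type*} [CommRing R] {M : Type*} [AddCommGroup M] [Module R M]

theorem ι_mul_ι_anticomm (x y : M) : ι R x * ι R y = -(ι R y * ι R x) :=
  eq_neg_of_add_eq_zero_left (ι_add_mul_swap x y)

theorem commute_ι_ι_mul_ι (x y z : M) : Commute (ι R x) (ι R y * ι R z) :=
  commute_mul_of_anticomm (ι_mul_ι_anticomm x y) (ι_mul_ι_anticomm x z)

theorem commute_ι_mul_ι_ι_mul_ι (w x y z : M) :
    Commute (ι R w * ι R x) (ι R y * ι R z) :=
  (commute_ι_ι_mul_ι y w x).symm.mul_right (commute_ι_ι_mul_ι z w x).symm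

theorem ι_mul_ι_mul_ι_mul_ι_anticomm (w x y z : M) :
    ι R w * (ι R x * ι R y * ι R z) = -(ι R x * ι R y * ι R z * ι R w) :=
  anticomm_mul_of_commute_of_anticomm (commute_ι_ι_mul_ι w x y) (ι_mul_ι_anticomm w z)

end ExteriorAlgebra

open ExteriorAlgebra

/-- **Cyclic Grassmann loop sign identity.**
For a free `R`-module `M` with basis `e` indexed by `Fin 4 × Fin m` (`m ≥ 1`), writing
`a k = ι (e (0,k))`, `ā k = ι (e (1,k))`, `c k = ι (e (2,k))`, `c̄ k = ι (e (3,k))` in the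
exterior algebra, the ordered product
`∏ k, (c̄ k * a k) * (-(ā k * c ((k+1) mod m)))` equals
`(-1)^(m+1) • ∏ k, (a k * ā k * c k * c̄ k)`. -/
theorem exteriorAlgebra_cyclic_loop_sign {R : Type*} [CommRing R] {M : Type*} [AddCommGroup M]
    [Module R M] {m : ℕ} (hm : 1 ≤ m) (e : Module.Basis (Fin 4 × Fin m) R M) :
    (List.ofFn fun k : Fin m =>
        (ExteriorAlgebra.ι R (e ((3 : Fin 4), k)) * ExteriorAlgebra.ι R (e ((0 : Fin 4), k))) *
          (-(ExteriorAlgebra.ι R (e ((1 : Fin 4), k)) *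
              ExteriorAlgebra.ι R
                (e ((2 : Fin 4), (⟨(k.val + 1) % m, Nat.mod_lt _ (by omega)⟩ : Fin m)))))).prod
      = ((-1 : R) ^ (m + 1)) •
        (List.ofFn fun k : Fin m =>
          ExteriorAlgebra.ι R (e ((0 : Fin 4), k)) * ExteriorAlgebra.ι R (e ((1 : Fin 4), k)) *
            ExteriorAlgebra.ι R (e ((2 : Fin 4), k)) *
            ExteriorAlgebra.ι R (e ((3 : Fin 4), k))).prod := by
  obtain ⟨n, rfl⟩ : ∃ n, m = n + 1 := ⟨m - 1, by omega⟩
  let v (i : Fin 4) (k : ℕ) : ExteriorAlgebra R M := ι R (e (i, Fin.ofNat (n + 1) k))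
  let x (k : ℕ) := v 3 k * v 0 k * v 1 k
  have hv (i : Fin 4) (k : Fin (n + 1)) : v i k = ι R (e (i, k)) := by simp [v]
  have hblocks (k : ℕ) : v 2 k * x k = (v 2 k * v 3 k) * (v 0 k * v 1 k) := by
    simp only [x, mul_assoc]
  have hrotate (k : ℕ) : v 2 k * x k = v 0 k * v 1 k * v 2 k * v 3 k := by
    rw [hblocks, (commute_ι_mul_ι_ι_mul_ι ..).eq, ← mul_assoc]
  have hcyclic := List.prod_range_succ_map_mul_shift_eq_neg x (v 2) n (by simp [v])
    (ι_mul_ι_mul_ι_mul_ι_anticomm ..)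
    fun k => hblocks (k + 1) ▸ (commute_ι_ι_mul_ι ..).mul_right (commute_ι_ι_mul_ι ..)
  rw [List.ofFn_eq_map_range _ (Neg.neg ∘ fun k => x k * v 2 (k + 1)) fun k => by
      simp only [Function.comp_apply, x, hv, mul_neg, mul_assoc]; rfl,
    List.ofFn_eq_map_range _ (fun k => v 0 k * v 1 k * v 2 k * v 3 k) fun k => by simp only [hv],
    ← List.map_map, List.prod_map_neg, List.length_map, List.length_range, hcyclic]
  simp only [hrotate]
  rw [Algebra.smul_def, pow_succ _ (n + 1)]
  simp
end

section
/- If B is an alternating bilinear form on the finite 𝔽₂-vector space V, then the set of quadratic refinements of B has exactly Fintype.card V elements (equivalently, 2^(dim V) elements): the quadratic refinements form a torsor over the dual space of V under pointwise addition of linear functionals. -/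
open scoped Classical

/-!
Fix a basis of `V`. Since `B` is alternating, it is the antisymmetrisation `C - Cᵀ` of its strictly
upper triangular part `C`, so in characteristic two `q x = C x x` is a quadratic refinement of `B`.
Two refinements differ by an additive map `V → 𝔽₂`, i.e. by a linear functional, so the
refinements are in bijection with the dual space, which has as many elements as `V`.
-/

namespace LinearMap.IsAlt

variable {R M N ι : Type*} [CommRing R] [AddCommGroup M] [Module R M] [AddCommGroup N] [Module R N]
  [Fintype ι] [LinearOrder ι]

theorem exists_sub_flip_eq (b : Module.Basis ι R M) {B : M →ₗ[R] M →ₗ[R] N} (hB : B.IsAlt) :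
    ∃ C : M →ₗ[R] M →ₗ[R] N, C - C.flip = B := by
  refine ⟨Matrix.toLinearMap₂ b b (.of fun i j => if i < j then B (b i) (b j) else 0), ?_⟩
  refine b.ext fun i => b.ext fun j => ?_
  rw [sub_apply, sub_apply, flip_apply, Matrix.toLinearMap₂_apply_basis,
    Matrix.toLinearMap₂_apply_basis]
  simp only [Matrix.of_apply]
  rcases lt_trichotomy i j with hij | rfl | hji
  · simp [hij, hij.not_gt]
  · simp [hB.self_eq_zero]
  · simp [hji, hji.not_gt, hB.neg]

theorem exists_polarBilin_eq [CharP R 2] (b : Module.Basis ι R M) {B : M →ₗ[R] M →ₗ[R] R}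
    (hB : B.IsAlt) : ∃ Q : QuadraticMap R M R, Q.polarBilin = B := by
  obtain ⟨C, hC⟩ := exists_sub_flip_eq b hB
  refine ⟨BilinMap.toQuadraticMap C, ?_⟩
  rw [BilinMap.polarBilin_toQuadraticMap, ← hC]
  exact ext₂ fun x y => by simp [CharTwo.sub_eq_add]

end LinearMap.IsAlt

def refinementsEquivAddMonoidHom {G A : Type*} [AddCommGroup G] [AddCommGroup A]
    (β : G → G → A) (q₀ : G → A) (hq₀ : ∀ x y, q₀ (x + y) = q₀ x + q₀ y + β x y) :
    {q : G → A // ∀ x y, q (x + y) = q x + q y + β x y} ≃ (G →+ A) where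
  toFun q := AddMonoidHom.mk' (q.1 - q₀) fun x y => by
    simp only [Pi.sub_apply, q.2, hq₀]
    abel
  invFun f := ⟨f + q₀, fun x y => by
    simp only [Pi.add_apply, map_add, hq₀]
    abel⟩
  left_inv q := by ext; simp
  right_inv f := by ext; simp

/-- **Counting quadratic refinements.**
If `B` is an alternating bilinear form on a finite `𝔽₂`-vector space `V`, then the set of
quadratic refinements of `B` has exactly `Fintype.card V` elements (a torsor over the dual
space of `V`). -/
theorem quadRefinement_card {V : Type*} [AddCommGroup V] [Module (ZMod 2) V]
    [Fintype V] (B : V →ₗ[ZMod 2] V →ₗ[ZMod 2] ZMod 2)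
    (halt : ∀ x : V, B x x = 0) :
    Fintype.card {q : V → ZMod 2 // ∀ x y, q (x + y) = q x + q y + B x y}
      = Fintype.card V := by
  let b := Module.finBasis (ZMod 2) V
  obtain ⟨Q, hQ⟩ := LinearMap.IsAlt.exists_polarBilin_eq b halt
  have hQ_refines (x y : V) : Q (x + y) = Q x + Q y + B x y := by
    rw [QuadraticMap.map_add Q, ← hQ, QuadraticMap.polarBilin_apply_apply]
  rw [Fintype.card_eq_nat_card, Fintype.card_eq_nat_card]
  calc Nat.card {q : V → ZMod 2 // ∀ x y, q (x + y) = q x + q y + B x y}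
      = Nat.card (V →+ ZMod 2) := Nat.card_congr (refinementsEquivAddMonoidHom _ Q hQ_refines)
    _ = Nat.card (Module.Dual (ZMod 2) V) :=
      Nat.card_congr (AddMonoidHom.toZModLinearMapEquiv 2).toEquiv
    _ = Nat.card V := Nat.card_congr b.toDualEquiv.symm.toEquiv
end

section
/- Let B be a nondegenerate alternating bilinear form on the finite 𝔽₂-vector space V, and let q be a quadratic refinement of B. Then the integer sum S = ∑_{x ∈ V} (−1)^{q(x)} satisfies S² = Fintype.card V. -/
private lemma neg_one_pow_add' (a b : ZMod 2) :
    ((-1:ℤ)) ^ (a + b).val = ((-1:ℤ)) ^ a.val * ((-1:ℤ)) ^ b.val := by revert a b; decide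

private lemma sum_neg_one_linear' {V : Type*} [AddCommGroup V] [Module (ZMod 2) V] [Fintype V]
    (f : V →ₗ[ZMod 2] ZMod 2) (hf : ∃ a, f a ≠ 0) :
    ∑ x : V, ((-1:ℤ)) ^ (f x).val = 0 := by
  obtain ⟨a, ha⟩ := hf
  have ha1 : f a = 1 := by
    have : ∀ t : ZMod 2, t ≠ 0 → t = 1 := by decide
    exact this _ ha
  have hflip : ∀ t : ZMod 2, ((-1:ℤ)) ^ (t + 1).val = -((-1:ℤ)) ^ t.val := by decide
  have key : ∑ x : V, ((-1:ℤ)) ^ (f x).val = -∑ x : V, ((-1:ℤ)) ^ (f x).val := by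
    conv_lhs => rw [← Equiv.sum_comp (Equiv.addRight a) (fun x => ((-1:ℤ)) ^ (f x).val)]
    rw [← Finset.sum_neg_distrib]
    refine Finset.sum_congr rfl fun x _ => ?_
    have : f ((Equiv.addRight a) x) = f x + 1 := by
      simp [Equiv.coe_addRight, map_add, ha1]
    rw [this, hflip]
  linarith

/-- **Square of the Gauss–Arf sum.**
If `B` is a nondegenerate alternating bilinear form on a finite `𝔽₂`-vector space `V` and
`q` is a quadratic refinement of `B`, then `S = ∑ x, (-1)^(q x)` satisfies
`S² = Fintype.card V`. -/
theorem arf_sum_sq {V : Type*} [AddCommGroup V] [Module (ZMod 2) V]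
    [Fintype V] (B : V →ₗ[ZMod 2] V →ₗ[ZMod 2] ZMod 2)
    (halt : ∀ x : V, B x x = 0)
    (hnd : ∀ y : V, (∀ x : V, B x y = 0) → y = 0)
    (q : V → ZMod 2)
    (hq : ∀ x y, q (x + y) = q x + q y + B x y) :
    (∑ x : V, ((-1 : ℤ) ^ (q x).val)) ^ 2 = Fintype.card V := by
  classical
  have hq0 : q 0 = 0 := by
    have h := hq 0 0
    simp only [add_zero, zero_add, map_zero, LinearMap.zero_apply] at h
    have h2 : ∀ a b : ZMod 2, a = a + b → b = 0 := by decide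
    have := h2 _ _ h
    -- h : q 0 = q 0 + q 0
    have h3 : ∀ a : ZMod 2, a = a + a → a = 0 := by decide
    exact h3 _ h
  have key : ∀ z : V, (∑ x : V, ((-1:ℤ)) ^ ((B x) z).val) =
      if z = 0 then (Fintype.card V : ℤ) else 0 := by
    intro z
    split_ifs with h
    · subst h; simp
    · refine sum_neg_one_linear' (B.flip z) ?_
      by_contra hc
      push_neg at hc
      exact h (hnd z (fun x => by simpa using hc x))
  have hexp : ∀ a b c : ZMod 2, a + (a + b + c) = b + c := by decide
  calc (∑ x : V, ((-1:ℤ)) ^ (q x).val) ^ 2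
      = ∑ x : V, ∑ y : V, ((-1:ℤ)) ^ (q x).val * (-1) ^ (q y).val := by
        rw [sq, Finset.sum_mul_sum]
    _ = ∑ x : V, ∑ z : V, ((-1:ℤ)) ^ (q z).val * (-1) ^ ((B x) z).val := by
        refine Finset.sum_congr rfl fun x _ => ?_
        rw [← Equiv.sum_comp (Equiv.addLeft x)
          (fun y => ((-1:ℤ)) ^ (q x).val * (-1) ^ (q y).val)]
        refine Finset.sum_congr rfl fun z _ => ?_
        simp only [Equiv.coe_addLeft]
        rw [hq x z, ← neg_one_pow_add', hexp, neg_one_pow_add']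
    _ = ∑ z : V, ((-1:ℤ)) ^ (q z).val * ∑ x : V, (-1) ^ ((B x) z).val := by
        rw [Finset.sum_comm]
        exact Finset.sum_congr rfl fun z _ => (Finset.mul_sum _ _ _).symm
    _ = ∑ z : V, ((-1:ℤ)) ^ (q z).val * (if z = 0 then (Fintype.card V : ℤ) else 0) := by
        exact Finset.sum_congr rfl fun z _ => by rw [key z]
    _ = (Fintype.card V : ℤ) := by
        simp [mul_ite, mul_zero, Finset.sum_ite_eq', hq0]
end

section
/- Let B be a nondegenerate alternating bilinear form on the finite 𝔽₂-vector space V with dim V = 2g, and let q be a quadratic refinement of B. Then the Arf invariant of q is a sign: there exists ε ∈ {1, −1} with ∑_{x ∈ V} (−1)^{q(x)} = ε · 2^g. -/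
/-- **The Arf invariant is a sign.**
If `B` is a nondegenerate alternating bilinear form on a finite `𝔽₂`-vector space `V`
with `dim V = 2g` and `q` is a quadratic refinement of `B`, then there exists
`ε ∈ {1, -1}` with `∑ x, (-1)^(q x) = ε · 2^g`. -/
theorem arf_invariant_is_sign {V : Type*} [AddCommGroup V] [Module (ZMod 2) V]
    [Fintype V] (g : ℕ) (hdim : Module.finrank (ZMod 2) V = 2 * g)
    (B : V →ₗ[ZMod 2] V →ₗ[ZMod 2] ZMod 2)
    (halt : ∀ x : V, B x x = 0)
    (hnd : ∀ y : V, (∀ x : V, B x y = 0) → y = 0)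
    (q : V → ZMod 2)
    (hq : ∀ x y, q (x + y) = q x + q y + B x y) :
    ∃ ε : ℤ, (ε = 1 ∨ ε = -1) ∧ ∑ x : V, ((-1 : ℤ) ^ (q x).val) = ε * 2 ^ g := by
  set S : ℤ := ∑ x : V, ((-1 : ℤ) ^ (q x).val) with hSdef
  have key : ∀ a c : ZMod 2,
      (-1:ℤ)^a.val * (-1:ℤ)^((a+c).val) = (-1:ℤ)^c.val := by decide
  have key2 : ∀ a b : ZMod 2,
      (-1:ℤ)^((a+b).val) = (-1:ℤ)^a.val * (-1:ℤ)^b.val := by decide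
  have hq0 : q 0 = 0 := by
    have h : q 0 = q 0 + q 0 := by simpa using hq 0 0
    have h2 : q 0 + q 0 = 0 := CharTwo.add_self_eq_zero _
    rw [h, h2]
  have hcard : (Fintype.card V : ℤ) = 2 ^ (2 * g) := by
    have := Module.card_fintype (Module.finBasis (ZMod 2) V)
    simp only [ZMod.card, hdim, Fintype.card_fin] at this
    exact_mod_cast this
  -- inner character sum vanishes for z ≠ 0
  have inner : ∀ z : V, z ≠ 0 → ∑ x : V, (-1:ℤ)^((B x z).val) = 0 := by
    intro z hz
    obtain ⟨x₀, hx₀⟩ : ∃ x₀, B x₀ z ≠ 0 := by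
      by_contra h
      push_neg at h
      exact hz (hnd z h)
    have hx₀1 : B x₀ z = 1 := by
      have : (B x₀ z = 0) ∨ (B x₀ z = 1) := by
        revert hx₀; generalize B x₀ z = a; revert a; decide
      tauto
    have hre : ∑ x : V, (-1:ℤ)^((B x z).val)
        = ∑ x : V, (-1:ℤ)^((B (x + x₀) z).val) :=
      (Fintype.sum_equiv (Equiv.addRight x₀) _ _ (fun x => rfl)).symm
    have hflip : ∀ x : V, (-1:ℤ)^((B (x + x₀) z).val)
        = -(-1:ℤ)^((B x z).val) := by
      intro x
      have h1 : B (x + x₀) z = B x z + 1 := by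
        rw [map_add, LinearMap.add_apply, hx₀1]
      have h2 : ∀ a : ZMod 2, (-1:ℤ)^((a+1).val) = -(-1:ℤ)^a.val := by decide
      rw [h1, h2]
    rw [Finset.sum_congr rfl (fun x _ => hflip x), Finset.sum_neg_distrib] at hre
    linarith
  have hSS : S * S = 2 ^ (2 * g) := by
    have e1 : S * S = ∑ x : V, ∑ y : V, (-1:ℤ)^((q x).val) * (-1:ℤ)^((q y).val) := by
      rw [hSdef, Finset.sum_mul_sum]
    have e2 : ∀ x : V, ∑ y : V, (-1:ℤ)^((q x).val) * (-1:ℤ)^((q y).val)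
        = ∑ z : V, (-1:ℤ)^((q z).val) * (-1:ℤ)^((B x z).val) := by
      intro x
      rw [← (Fintype.sum_equiv (Equiv.addLeft x)
        (fun z => (-1:ℤ)^((q x).val) * (-1:ℤ)^((q (x + z)).val)) _ (fun z => rfl))]
      refine Finset.sum_congr rfl (fun z _ => ?_)
      rw [hq x z, add_assoc, key (q x) (q z + B x z), key2]
    have e3 : S * S = ∑ z : V, (-1:ℤ)^((q z).val) * ∑ x : V, (-1:ℤ)^((B x z).val) := by
      rw [e1, Finset.sum_congr rfl (fun x _ => e2 x), Finset.sum_comm]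
      exact Finset.sum_congr rfl (fun z _ => by rw [Finset.mul_sum])
    rw [e3, Finset.sum_eq_single 0]
    · simp only [hq0, ZMod.val_zero, pow_zero, one_mul]
      have : ∀ x : V, (-1:ℤ)^((B x (0:V)).val) = 1 := by
        intro x; simp [map_zero]
      rw [Finset.sum_congr rfl (fun x _ => this x), Finset.sum_const, Finset.card_univ,
        nsmul_eq_mul, mul_one, hcard]
    · intro z _ hz
      rw [inner z hz, mul_zero]
    · intro h; exact absurd (Finset.mem_univ 0) h
  have hfac : (S - 2 ^ g) * (S + 2 ^ g) = 0 := by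
    have : (2:ℤ) ^ (2 * g) = 2 ^ g * 2 ^ g := by
      rw [two_mul, pow_add]
    nlinarith [hSS]
  rcases mul_eq_zero.mp hfac with h | h
  · exact ⟨1, Or.inl rfl, by linarith⟩
  · exact ⟨-1, Or.inr rfl, by linarith⟩
end

section
/- Let B be an alternating bilinear form on the finite 𝔽₂-vector space V, let Q denote the set of quadratic refinements of B, let Z : V → ℂ be any function, and for q ∈ Q set D(q) = ∑_{x ∈ V} (−1)^{q(x)} Z(x). Then the values of Z are recovered by the inversion formula Z(x) = (Fintype.card V)⁻¹ ∑_{q ∈ Q} (−1)^{q(x)} D(q) for every x ∈ V. (This is the formula Z_ξ = ±2^{−2g} ∑_η (−1)^{q_η(ξ)} det K_η extracting the homology-class-ξ part of the dimer partition function from the twisted Kasteleyn determinants.) -/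
open scoped Classical

/-!
The quadratic refinements of an alternating form `B` over `𝔽₂` form a torsor under the dual
space `V*`: one exists (`q x = C x x` for the strictly upper-triangular half `C` of `B` in a
basis), and any two differ by a linear form, so `|Q| = |V|`. Since
`(-1)^(q x) (-1)^(q y) = (-1)^(B x y) (-1)^(q (x + y))`, and shifting `q` by a linear form `f`
with `f z = 1` flips the sign of `(-1)^(q z)`, summing over `Q` gives the orthogonality relation
`∑ q, (-1)^(q x) (-1)^(q y) = if x = y then |V| else 0`; exchanging the sums in the inversion
formula reduces it to this relation.
-/

theorem neg_one_pow_val_add {R : Type*} [Ring R] (a b : ZMod 2) :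
    (-1 : R) ^ (a + b).val = (-1) ^ a.val * (-1) ^ b.val := by
  rw [ZMod.val_add, ← neg_one_pow_eq_pow_mod_two, pow_add]

theorem LinearMap.exists_add_flip_eq {K V : Type*} [Field K] [AddCommGroup V] [Module K V]
    [FiniteDimensional K V] {B : V →ₗ[K] V →ₗ[K] K}
    (hsymm : ∀ x y, B x y = B y x) (halt : B.IsAlt) :
    ∃ C : V →ₗ[K] V →ₗ[K] K, C + C.flip = B := by
  let b := Module.finBasis K V
  refine ⟨Matrix.toLinearMap₂ b b (.of fun i j => if i < j then B (b i) (b j) else 0),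
    LinearMap.ext_basis b b fun i j => ?_⟩
  simp only [add_apply, flip_apply, Matrix.toLinearMap₂_apply_basis, Matrix.of_apply]
  rcases lt_trichotomy i j with h | rfl | h
  · simp [h, h.not_gt]
  · simp [halt.self_eq_zero]
  · simp [h, h.not_gt, hsymm]

section

variable {V : Type*} [AddCommGroup V] [Module (ZMod 2) V]

abbrev QuadRefinement (B : V →ₗ[ZMod 2] V →ₗ[ZMod 2] ZMod 2) : Type _ :=
  {q : V → ZMod 2 // ∀ x y, q (x + y) = q x + q y + B x y}

variable {B : V →ₗ[ZMod 2] V →ₗ[ZMod 2] ZMod 2}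

namespace QuadRefinement

theorem nonempty [Finite V] (hB : B.IsAlt) : Nonempty (QuadRefinement B) := by
  have hsymm (x y : V) : B x y = B y x := by rw [← hB.neg, ZMod.neg_eq_self_mod_two]
  obtain ⟨C, hC⟩ := LinearMap.exists_add_flip_eq hsymm hB
  refine ⟨⟨fun x => C x x, fun x y => ?_⟩⟩
  rw [← hC]
  simp only [map_add, LinearMap.add_apply, LinearMap.flip_apply]
  ring

def vadd (f : Module.Dual (ZMod 2) V) (q : QuadRefinement B) : QuadRefinement B :=
  ⟨fun x => q.1 x + f x, fun x y => by dsimp only; rw [q.2, map_add]; ring⟩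

theorem vadd_vadd (f : Module.Dual (ZMod 2) V) (q : QuadRefinement B) :
    vadd f (vadd f q) = q :=
  Subtype.ext <| funext fun x => by simp [vadd, add_assoc, CharTwo.add_self_eq_zero]

def vsub (q q' : QuadRefinement B) : Module.Dual (ZMod 2) V :=
  (AddMonoidHom.mk' (fun x => q.1 x - q'.1 x) fun x y => by rw [q.2, q'.2]; ring).toZModLinearMap 2

def equivDual (q₀ : QuadRefinement B) : QuadRefinement B ≃ Module.Dual (ZMod 2) V where
  toFun q := vsub q q₀
  invFun f := vadd f q₀
  left_inv q := Subtype.ext <| funext fun x => by simp [vadd, vsub]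
  right_inv f := LinearMap.ext fun x => by simp [vadd, vsub]

theorem card_eq [Fintype V] (q₀ : QuadRefinement B) :
    Fintype.card (QuadRefinement B) = Fintype.card V := by
  rw [← Nat.card_eq_fintype_card, ← Nat.card_eq_fintype_card]
  exact Nat.card_congr <|
    (equivDual q₀).trans (Module.finBasis (ZMod 2) V).toDualEquiv.symm.toEquiv

variable {R : Type*} [CommRing R] [NoZeroDivisors R] [CharZero R]

theorem sum_neg_one_pow_apply_eq_zero [Fintype V] {z : V} (hz : z ≠ 0) :
    ∑ q : QuadRefinement B, (-1 : R) ^ (q.1 z).val = 0 := by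
  obtain ⟨f, hf⟩ : ∃ f : Module.Dual (ZMod 2) V, f z = 1 := by
    obtain ⟨f, hf⟩ :=
      not_forall.mp <| (Module.forall_dual_apply_eq_zero_iff (ZMod 2) z).not.mpr hz
    exact ⟨f, (by decide : ∀ a : ZMod 2, a ≠ 0 → a = 1) _ hf⟩
  let shift : Equiv.Perm (QuadRefinement B) := Function.Involutive.toPerm _ (vadd_vadd f)
  refine CharZero.eq_neg_self_iff.mp ?_
  rw [← Finset.sum_neg_distrib]
  refine Fintype.sum_equiv shift _ _ fun q => ?_
  change _ = -(-1 : R) ^ (q.1 z + f z).val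
  rw [neg_one_pow_val_add, hf, show (1 : ZMod 2).val = 1 from rfl, pow_one, mul_neg_one, neg_neg]

theorem sum_neg_one_pow_mul_neg_one_pow [Fintype V] (hB : B.IsAlt) (x y : V) :
    ∑ q : QuadRefinement B, (-1 : R) ^ (q.1 x).val * (-1) ^ (q.1 y).val =
      if x = y then (Fintype.card V : R) else 0 := by
  obtain ⟨q₀⟩ := nonempty hB
  by_cases hxy : x = y
  · subst hxy
    simp [← neg_one_pow_val_add, CharTwo.add_self_eq_zero, card_eq q₀]
  have hsum : x + y ≠ 0 := by
    rwa [Ne, add_eq_zero_iff_eq_neg, ZModModule.neg_eq_self]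
  have hterm (q : QuadRefinement B) :
      (-1 : R) ^ (q.1 x).val * (-1) ^ (q.1 y).val =
        (-1) ^ (B x y).val * (-1) ^ (q.1 (x + y)).val := by
    rw [← neg_one_pow_val_add, ← neg_one_pow_val_add, q.2, add_comm (B x y), add_assoc,
      CharTwo.add_self_eq_zero, add_zero]
  simp only [hterm, ← Finset.mul_sum, sum_neg_one_pow_apply_eq_zero hsum, mul_zero, if_neg hxy]

theorem inversion {K : Type*} [Field K] [CharZero K] [Fintype V] (hB : B.IsAlt) (Z : V → K)
    (x : V) :
    (Fintype.card V : K)⁻¹ *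
      ∑ q : QuadRefinement B, (-1 : K) ^ (q.1 x).val * ∑ y, (-1 : K) ^ (q.1 y).val * Z y =
      Z x := by
  have hcard : (Fintype.card V : K) ≠ 0 := Nat.cast_ne_zero.mpr Fintype.card_ne_zero
  rw [inv_mul_eq_iff_eq_mul₀ hcard]
  calc ∑ q : QuadRefinement B, (-1 : K) ^ (q.1 x).val * ∑ y, (-1 : K) ^ (q.1 y).val * Z y
      = ∑ y, (∑ q : QuadRefinement B, (-1 : K) ^ (q.1 x).val * (-1) ^ (q.1 y).val) * Z y := by
        simp only [Finset.mul_sum, Finset.sum_mul, mul_assoc]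
        exact Finset.sum_comm
    _ = Fintype.card V * Z x := by simp [sum_neg_one_pow_mul_neg_one_pow hB]

end QuadRefinement

end

/-- **Inversion formula for spin-structure sums.**
Let `B` be an alternating bilinear form on a finite `𝔽₂`-vector space `V`, `Q` the set of
quadratic refinements of `B`, and `Z : V → ℂ`. Setting `D q = ∑ x, (-1)^(q x) * Z x`, the
values of `Z` are recovered as `Z x = (card V)⁻¹ * ∑ q, (-1)^(q x) * D q`. -/
theorem quadRefinement_inversion {V : Type*} [AddCommGroup V] [Module (ZMod 2) V]
    [Fintype V] (B : V →ₗ[ZMod 2] V →ₗ[ZMod 2] ZMod 2)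
    (halt : ∀ x : V, B x x = 0) (Z : V → ℂ)
    (D : {q : V → ZMod 2 // ∀ x y, q (x + y) = q x + q y + B x y} → ℂ)
    (hD : ∀ q, D q = ∑ x : V, ((-1 : ℂ) ^ (q.1 x).val) * Z x) :
    ∀ x : V, Z x = (Fintype.card V : ℂ)⁻¹ *
      ∑ q : {q : V → ZMod 2 // ∀ x y, q (x + y) = q x + q y + B x y},
        ((-1 : ℂ) ^ (q.1 x).val) * D q := by
  intro x
  simp only [hD]
  exact (QuadRefinement.inversion halt Z x).symm
end

section
/- Let B be an alternating bilinear form on the finite 𝔽₂-vector space V and let Q denote the set of quadratic refinements of B. Then for every x ∈ V, ∑_{q ∈ Q} ( (−1)^{q(x)} · ∑_{x′ ∈ V} (−1)^{q(x′)} ) = Fintype.card V. In particular, when dim V = 2g this says ∑_{q ∈ Q} Arf(q) · (−1)^{q(x)} = 2^g for every x ∈ V. -/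
/-!
Quadratic refinements of `B` form a torsor under the dual space: once one refinement `q₀` is
fixed, the others are exactly `q₀ + f` with `f` linear. Such a `q₀` exists because an alternating
form in characteristic two is `C + Cᵀ` for a bilinear `C` (its strictly upper triangular half in
an ordered basis), and then `q₀ x = C x x`. Summing the characters `(-1)^{f v}` over all `f`
gives `|V|` at `v = 0` and `0` elsewhere, so `∑_q (-1)^{q x + q x'} = |V| δ_{x x'}`, and the
column sum collapses to its `x' = x` term.
-/

open scoped Classical

open Module

section

variable {R M : Type*} [CommRing R] [AddCommGroup M] [Module R M]

theorem LinearMap.IsAlt.exists_add_flip_eq [CharP R 2] [Module.Free R M]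
    {B : M →ₗ[R] M →ₗ[R] R} (hB : B.IsAlt) : ∃ C : M →ₗ[R] M →ₗ[R] R, C + C.flip = B := by
  obtain ⟨ι, b⟩ := Module.Free.exists_basis (R := R) (M := M)
  let : LinearOrder ι := IsWellOrder.linearOrder WellOrderingRel
  refine ⟨b.constr R fun i => b.constr R fun j => if i < j then B (b i) (b j) else 0, ?_⟩
  refine b.ext fun i => b.ext fun j => ?_
  obtain h | rfl | h := lt_trichotomy i j
  · simp [h, h.not_gt]
  · simp [hB.self_eq_zero]
  · simp [h, h.not_gt, ← hB.neg (b i), CharTwo.neg_eq]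

-- An `abbrev`, so that the `Fintype` instance on `{q // IsQuadRefinement B q}` is the one found
-- for the unfolded subtype.
abbrev IsQuadRefinement (B : M →ₗ[R] M →ₗ[R] R) (q : M → R) : Prop :=
  ∀ x y, q (x + y) = q x + q y + B x y

theorem LinearMap.IsAlt.exists_isQuadRefinement [CharP R 2] [Module.Free R M]
    {B : M →ₗ[R] M →ₗ[R] R} (hB : B.IsAlt) : ∃ q, IsQuadRefinement B q := by
  obtain ⟨C, rfl⟩ := hB.exists_add_flip_eq
  refine ⟨fun x => C x x, fun x y => ?_⟩
  simp only [map_add, LinearMap.add_apply, LinearMap.flip_apply]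
  ring

namespace IsQuadRefinement

variable {B : M →ₗ[R] M →ₗ[R] R} {q q' : M → R}

theorem add_linearMap (hq : IsQuadRefinement B q) (f : M →ₗ[R] R) :
    IsQuadRefinement B (q + f) := fun x y => by
  simp only [Pi.add_apply, hq x y, map_add]
  ring

theorem sub_map_add (hq : IsQuadRefinement B q) (hq' : IsQuadRefinement B q') (x y : M) :
    (q - q') (x + y) = (q - q') x + (q - q') y := by
  simp only [Pi.sub_apply, hq x y, hq' x y]
  ring

end IsQuadRefinement

end

section

variable {V : Type*} [AddCommGroup V] [Module (ZMod 2) V]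

theorem neg_one_pow_val_add_zmod_two (a b : ZMod 2) :
    (-1 : ℤ) ^ (a + b).val = (-1) ^ a.val * (-1) ^ b.val := by
  decide +revert

theorem card_dual_eq_card {K W : Type*} [Field K] [Fintype K] [AddCommGroup W] [Module K W]
    [Fintype W] [Fintype (Dual K W)] :
    Fintype.card (Dual K W) = Fintype.card W := by
  rw [Module.card_eq_pow_finrank (K := K), Module.card_eq_pow_finrank (K := K) (V := W),
    Subspace.dual_finrank_eq]

theorem sum_dual_neg_one_pow_val [Fintype V] [Fintype (Dual (ZMod 2) V)] (v : V) :
    ∑ f : Dual (ZMod 2) V, (-1 : ℤ) ^ (f v).val = if v = 0 then (Fintype.card V : ℤ) else 0 := by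
  split_ifs with hv
  · simp [hv, card_dual_eq_card]
  obtain ⟨g, hg⟩ : ∃ g : Dual (ZMod 2) V, g v = 1 := by
    obtain ⟨g, hg⟩ : ∃ g : Dual (ZMod 2) V, g v ≠ 0 := by
      by_contra! h
      exact hv ((Module.forall_dual_apply_eq_zero_iff (ZMod 2) v).mp h)
    exact ⟨g, Fin.eq_one_of_ne_zero _ hg⟩
  have hflip : ∑ f : Dual (ZMod 2) V, (-1 : ℤ) ^ (f v).val
      = -∑ f : Dual (ZMod 2) V, (-1 : ℤ) ^ (f v).val := by
    calc _ = ∑ f : Dual (ZMod 2) V, (-1 : ℤ) ^ ((f + g) v).val :=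
          (Equiv.sum_comp (Equiv.addRight g) _).symm
      _ = _ := by simp [neg_one_pow_val_add_zmod_two, hg, ZMod.val_one]
  linarith

variable {B : V →ₗ[ZMod 2] V →ₗ[ZMod 2] ZMod 2} {q₀ : V → ZMod 2}

def IsQuadRefinement.dualEquiv (h₀ : IsQuadRefinement B q₀) :
    Dual (ZMod 2) V ≃ {q // IsQuadRefinement B q} where
  toFun f := ⟨q₀ + f, h₀.add_linearMap f⟩
  invFun q := (AddMonoidHom.mk' (q.1 - q₀) (q.2.sub_map_add h₀)).toZModLinearMap 2
  left_inv f := by ext; simp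
  right_inv q := by ext; simp

theorem IsQuadRefinement.sum_neg_one_pow_mul_neg_one_pow [Fintype V]
    (h₀ : IsQuadRefinement B q₀) (x x' : V) :
    ∑ q : {q // IsQuadRefinement B q}, (-1 : ℤ) ^ (q.1 x).val * (-1) ^ (q.1 x').val
      = if x' = x then (Fintype.card V : ℤ) else 0 := by
  have := DFunLike.finite (Dual (ZMod 2) V)
  have := Fintype.ofFinite (Dual (ZMod 2) V)
  rw [← h₀.dualEquiv.sum_comp]
  calc ∑ f : Dual (ZMod 2) V, (-1 : ℤ) ^ (q₀ x + f x).val * (-1) ^ (q₀ x' + f x').val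
      = ∑ f : Dual (ZMod 2) V, (-1 : ℤ) ^ (q₀ x + q₀ x').val * (-1) ^ (f (x + x')).val := by
        refine Finset.sum_congr rfl fun f _ => ?_
        simp only [map_add, neg_one_pow_val_add_zmod_two]
        ring
    _ = if x' = x then (Fintype.card V : ℤ) else 0 := by
        rw [← Finset.mul_sum, sum_dual_neg_one_pow_val, add_eq_zero_iff_neg_eq,
          ZModModule.neg_eq_self x]
        obtain rfl | h := eq_or_ne x' x
        · simp [ZModModule.add_self]
        · simp [h, h.symm]

end

/-- **Column sums of the Arf-weighted sign matrix.**
Let `B` be an alternating bilinear form on a finite `𝔽₂`-vector space `V` and `Q` the set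
of quadratic refinements of `B`. Then for every `x : V`,
`∑ q ∈ Q, (-1)^(q x) * (∑ x', (-1)^(q x')) = Fintype.card V`
(when `dim V = 2g` this says `∑ q, Arf(q) * (-1)^(q x) = 2^g`). -/
theorem quadRefinement_arf_column_sum {V : Type*} [AddCommGroup V] [Module (ZMod 2) V]
    [Fintype V] (B : V →ₗ[ZMod 2] V →ₗ[ZMod 2] ZMod 2)
    (halt : ∀ x : V, B x x = 0) :
    ∀ x : V,
      ∑ q : {q : V → ZMod 2 // ∀ x y, q (x + y) = q x + q y + B x y},
        ((-1 : ℤ) ^ (q.1 x).val * ∑ x' : V, (-1 : ℤ) ^ (q.1 x').val)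
      = Fintype.card V := by
  intro x
  obtain ⟨q₀, h₀⟩ := LinearMap.IsAlt.exists_isQuadRefinement halt
  simp_rw [Finset.mul_sum]
  rw [Finset.sum_comm]
  calc _ = ∑ x' : V, if x' = x then (Fintype.card V : ℤ) else 0 :=
        Finset.sum_congr rfl fun x' _ => h₀.sum_neg_one_pow_mul_neg_one_pow x x'
    _ = Fintype.card V := by simp
end
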